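/- Mirror descent with constant step size 1/L on an objective that is L-relatively smooth and μ-relatively strongly convex converges linearly: under the assumptions above plus convexity of f − μφ on relint C with μ > 0, the iterates satisfy f(x^k) − f* ≤ (1 − μ/L)^k · L · D_φ(x*, x^0) for all k ≥ 1. -/

import Mathlib

open scoped RealInnerProductSpace

noncomputable def bregman {V : Type*} [NormedAddCommGroup V] [InnerProductSpace ℝ V]
    [CompleteSpace V] (φ : V → ℝ) (x y : V) : ℝ :=
  φ x - φ y - ⟪gradient φ y, x - y⟫

/-!
A mirror step from `x` to `x⁺` satisfies `f x⁺ - f y + L·D_φ(y, x⁺) ≤ (L - μ)·D_φ(y, x)` for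
every `y ∈ C`: add the descent inequality `D_f(x⁺, x) ≤ L·D_φ(x⁺, x)` (relative smoothness),
the bound `μ·D_φ(y, x) ≤ D_f(y, x)` (relative strong convexity), and the three-point inequality
of the Bregman proximal step (first-order optimality of `x⁺` plus the three-point identity for
`D_φ`). For `y = x*` the gap `f x⁺ - f*` is nonnegative, so `L·D_φ(x*, x^k)` contracts by the
factor `1 - μ/L`, and it dominates the next gap.
-/
open Set Filter

theorem Convex.openSegment_self_intrinsicInterior_subset_intrinsicInterior
    {V : Type*} [NormedAddCommGroup V] [NormedSpace ℝ V] {s : Set V} (hs : Convex ℝ s)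
    {x y : V} (hx : x ∈ s) (hy : y ∈ intrinsicInterior ℝ s) :
    openSegment ℝ x y ⊆ intrinsicInterior ℝ s := by
  obtain ⟨y, hy, rfl⟩ := hy
  rw [openSegment_eq_image']
  rintro _ ⟨t, ht, rfl⟩
  have hxA := subset_affineSpan ℝ s hx
  let z : affineSpan ℝ s := ⟨x + t • ((y : V) - x), by
    simpa [vsub_eq_sub, vadd_eq_add, add_comm] using
      (affineSpan ℝ s).smul_vsub_vadd_mem t y.2 hxA hxA⟩
  -- the inverse of the homothety with centre `x` and ratio `t`, which maps `y` to `z`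
  let expand : affineSpan ℝ s → affineSpan ℝ s := fun w =>
    ⟨t⁻¹ • ((w : V) -ᵥ (z : V)) +ᵥ (y : V), (affineSpan ℝ s).smul_vsub_vadd_mem _ w.2 z.2 y.2⟩
  have hexpand : Continuous expand := Continuous.subtype_mk (by fun_prop) _
  have hexpand_z : expand z = y := by ext; simp [expand]
  refine ⟨z, ?_, rfl⟩
  rw [mem_interior_iff_mem_nhds] at hy ⊢
  refine mem_of_superset (hexpand.continuousAt.preimage_mem_nhds (hexpand_z ▸ hy)) ?_
  intro w hw
  have hw' : (w : V) = x + t • ((expand w : V) - x) := by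
    simp only [expand, z, vsub_eq_sub, vadd_eq_add]
    rw [smul_sub t (t⁻¹ • _ + _), smul_add, smul_inv_smul₀ ht.1.ne']
    module
  show (w : V) ∈ s
  rw [hw']
  exact hs.add_smul_sub_mem hx hw ⟨ht.1.le, ht.2.le⟩

theorem ConvexOn.add_apply_sub_le_of_openSegment_subset
    {E : Type*} [NormedAddCommGroup E] [NormedSpace ℝ E] {S : Set E} {g : E → ℝ}
    {g' : E →L[ℝ] ℝ} {x y : E} (hg : ConvexOn ℝ S g) (hx : x ∈ S)
    (hseg : openSegment ℝ x y ⊆ S) (hg' : HasFDerivAt g g' x) (hgy : ContinuousAt g y) :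
    g x + g' (y - x) ≤ g y := by
  set h : ℝ → ℝ := g ∘ AffineMap.lineMap x y
  have hh : ConvexOn ℝ (AffineMap.lineMap x y ⁻¹' S) h := hg.comp_affineMap _
  have h0 : (0 : ℝ) ∈ AffineMap.lineMap x y ⁻¹' S := by simpa using hx
  have hmem : ∀ t ∈ Ioo (0 : ℝ) 1, t ∈ AffineMap.lineMap x y ⁻¹' S := fun t ht =>
    hseg (openSegment_eq_image_lineMap ℝ x y ▸ mem_image_of_mem _ ht)
  have hh' : HasDerivAt h (g' (y - x)) 0 := by
    refine HasFDerivAt.comp_hasDerivAt _ ?_ AffineMap.hasDerivAt_lineMap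
    simpa using hg'
  have hslope : ContinuousWithinAt (slope h 0) (Iio 1) 1 := by
    have : ContinuousAt h 1 :=
      ContinuousAt.comp (by simpa using hgy) (AffineMap.lineMap_continuous.continuousAt)
    rw [slope_fun_def_field]
    exact ((this.sub continuousAt_const).div (by fun_prop) (by norm_num)).continuousWithinAt
  have hle : g' (y - x) ≤ slope h 0 1 := by
    refine ge_of_tendsto hslope ?_
    filter_upwards [Ioo_mem_nhdsLT (show (0 : ℝ) < 1 by norm_num)] with t ht
    exact hh.le_slope_of_hasDerivAt h0 (hmem t ht) ht.1 hh'
  simp only [h, slope_def_field, Function.comp_apply, AffineMap.lineMap_apply_one,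
    AffineMap.lineMap_apply_zero, sub_zero, div_one] at hle
  linarith

section Bregman

variable {V : Type*} [NormedAddCommGroup V] [InnerProductSpace ℝ V] [CompleteSpace V]
  {φ ψ : V → ℝ} {x y : V}

theorem bregman_eq_fderiv (φ : V → ℝ) (x y : V) :
    bregman φ x y = φ x - φ y - fderiv ℝ φ y (x - y) := by
  rw [bregman, inner_gradient_left]

theorem bregman_sub (hφ : DifferentiableAt ℝ φ y) (hψ : DifferentiableAt ℝ ψ y) :
    bregman (fun z => φ z - ψ z) x y = bregman φ x y - bregman ψ x y := by
  simp only [bregman_eq_fderiv, fderiv_fun_sub hφ hψ, sub_apply]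
  ring

theorem bregman_const_mul (a : ℝ) (hφ : DifferentiableAt ℝ φ y) :
    bregman (fun z => a * φ z) x y = a * bregman φ x y := by
  simp only [bregman_eq_fderiv, fderiv_const_mul hφ, smul_apply, smul_eq_mul]
  ring

theorem hasFDerivAt_bregman_left (hφ : DifferentiableAt ℝ φ x) :
    HasFDerivAt (fun z => bregman φ z y) (fderiv ℝ φ x - fderiv ℝ φ y) x := by
  simp only [bregman_eq_fderiv, map_sub]
  exact ((hφ.hasFDerivAt.sub_const _).sub ((fderiv ℝ φ y).hasFDerivAt.sub_const _))

theorem bregman_sub_bregman_sub_bregman (φ : V → ℝ) (a b c : V) :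
    bregman φ a c - bregman φ a b - bregman φ b c =
      fderiv ℝ φ b (a - b) - fderiv ℝ φ c (a - b) := by
  simp only [bregman_eq_fderiv, map_sub]
  ring

theorem ConvexOn.bregman_nonneg {S : Set V} (hφ : ConvexOn ℝ S φ) (hx : x ∈ S)
    (hseg : openSegment ℝ x y ⊆ S) (hφx : DifferentiableAt ℝ φ x) (hφy : ContinuousAt φ y) :
    0 ≤ bregman φ y x := by
  have := hφ.add_apply_sub_le_of_openSegment_subset hx hseg hφx.hasFDerivAt hφy
  rw [bregman_eq_fderiv]
  linarith

theorem IsMinOn.inner_add_bregman_add_bregman_le {S : Set V} {c v w : V} {L : ℝ}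
    (hS : Convex ℝ S) (hmin : IsMinOn (fun z => ⟪c, z⟫ + L * bregman φ z v) S w)
    (hw : w ∈ S) (hy : y ∈ S) (hφ : DifferentiableAt ℝ φ w) :
    ⟪c, w⟫ + L * bregman φ w v + L * bregman φ y w ≤ ⟪c, y⟫ + L * bregman φ y v := by
  have hderiv : HasFDerivAt (fun z => ⟪c, z⟫ + L * bregman φ z v)
      (innerSL ℝ c + L • (fderiv ℝ φ w - fderiv ℝ φ v)) w :=
    (innerSL ℝ c).hasFDerivAt.add ((hasFDerivAt_bregman_left hφ).const_mul L)
  have hopt := hmin.localize.hasFDerivWithinAt_nonneg hderiv.hasFDerivWithinAt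
    (sub_mem_posTangentConeAt_of_segment_subset (hS.segment_subset hw hy))
  have hthree := bregman_sub_bregman_sub_bregman φ y w v
  simp only [add_apply, smul_apply, sub_apply, innerSL_apply_apply, smul_eq_mul] at hopt
  rw [← hthree, inner_sub_right] at hopt
  linarith

end Bregman

theorem mirrorStep_sub_add_mul_bregman_le {V : Type*} [NormedAddCommGroup V]
    [InnerProductSpace ℝ V] [CompleteSpace V] {C : Set V} {f φ : V → ℝ} {L μ : ℝ} {x x' y : V}
    (hC : Convex ℝ C) (hf : Differentiable ℝ f) (hφ : Differentiable ℝ φ)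
    (hsmooth : ConvexOn ℝ (intrinsicInterior ℝ C) (fun z => L * φ z - f z))
    (hstrong : ConvexOn ℝ (intrinsicInterior ℝ C) (fun z => f z - μ * φ z))
    (hx : x ∈ intrinsicInterior ℝ C) (hx' : x' ∈ intrinsicInterior ℝ C)
    (hmin : IsMinOn (fun z => ⟪gradient f x, z⟫ + L * bregman φ z x) C x') (hy : y ∈ C) :
    f x' - f y + L * bregman φ y x' ≤ (L - μ) * bregman φ y x := by
  have hdescent : 0 ≤ L * bregman φ x' x - bregman f x' x := by
    have := hsmooth.bregman_nonneg hx (hsmooth.1.openSegment_subset hx hx') (by fun_prop)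
      ((continuous_const.mul hφ.continuous).sub hf.continuous).continuousAt
    rwa [bregman_sub ((hφ x).const_mul L) (hf x), bregman_const_mul L (hφ x)] at this
  have hgrowth : 0 ≤ bregman f y x - μ * bregman φ y x := by
    have hseg : openSegment ℝ x y ⊆ intrinsicInterior ℝ C := by
      rw [openSegment_symm]
      exact hC.openSegment_self_intrinsicInterior_subset_intrinsicInterior hy hx
    have := hstrong.bregman_nonneg hx hseg (by fun_prop)
      (hf.continuous.sub (continuous_const.mul hφ.continuous)).continuousAt
    rwa [bregman_sub (hf x) ((hφ x).const_mul μ), bregman_const_mul μ (hφ x)] at this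
  have hthree := hmin.inner_add_bregman_add_bregman_le hC (intrinsicInterior_subset hx') hy (hφ x')
  have hf_bregman : ∀ z, bregman f z x = f z - f x - ⟪gradient f x, z⟫ + ⟪gradient f x, x⟫ :=
    fun z => by rw [bregman, inner_sub_right]; ring
  rw [hf_bregman] at hdescent hgrowth
  linarith

theorem le_pow_mul_of_add_le_mul {a e : ℕ → ℝ} {r : ℝ} (ha : ∀ k, 0 ≤ a k) (he : ∀ k, 0 ≤ e k)
    (hstep : ∀ k, a (k + 1) + e (k + 1) ≤ r * e k) (k : ℕ) :
    a (k + 1) ≤ r ^ (k + 1) * e 0 := by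
  rcases le_or_gt 0 r with hr | hr
  · have hdecay : ∀ k, e k ≤ r ^ k * e 0 := by
      intro k
      induction k with
      | zero => simp
      | succ k ih =>
        calc e (k + 1) ≤ r * e k := by linarith [hstep k, ha (k + 1)]
          _ ≤ r * (r ^ k * e 0) := by gcongr
          _ = r ^ (k + 1) * e 0 := by ring
    calc a (k + 1) ≤ r * e k := by linarith [hstep k, he (k + 1)]
      _ ≤ r * (r ^ k * e 0) := by gcongr; exact hdecay k
      _ = r ^ (k + 1) * e 0 := by ring
  · -- a negative ratio forces `e 0 = 0`
    have he0 : e 0 = 0 := by nlinarith [hstep 0, ha 1, he 1, he 0]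
    rw [he0, mul_zero]
    nlinarith [hstep k, he k, he (k + 1)]

theorem stmt_8_general {V : Type*} [NormedAddCommGroup V] [InnerProductSpace ℝ V]
    [FiniteDimensional ℝ V]
    (C : Set V) (hC : Convex ℝ C) (f φ : V → ℝ) (L : ℝ) (hL : 0 < L)
    (hf : Differentiable ℝ f)
    -- φ is Legendre: lower semicontinuous, strictly convex, essentially smooth
    (hφsc : StrictConvexOn ℝ C φ)
    (hφdiff : Differentiable ℝ φ)
    -- f is L-smooth relative to φ on C
    (hsmooth : ConvexOn ℝ (intrinsicInterior ℝ C) (fun x => L * φ x - f x))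
    -- the mirror descent iterates, well-defined in the relative interior of C
    (x : ℕ → V) (hmem : ∀ k, x k ∈ intrinsicInterior ℝ C)
    (hiter : ∀ k, ∀ y ∈ C,
      ⟪gradient f (x k), x (k + 1)⟫ + L * bregman φ (x (k + 1)) (x k) ≤
        ⟪gradient f (x k), y⟫ + L * bregman φ y (x k))
    -- f is μ-strongly convex relative to φ on C
    (μ : ℝ)
    (hstrong : ConvexOn ℝ (intrinsicInterior ℝ C) (fun x => f x - μ * φ x))
    -- x* is a minimizer of f over C
    (xstar : V) (hxstar : xstar ∈ C) (hopt : ∀ y ∈ C, f xstar ≤ f y) :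
    ∀ k : ℕ, 1 ≤ k →
      f (x k) - f xstar ≤ (1 - μ / L) ^ k * L * bregman φ xstar (x 0) := by
  have hmemC : ∀ k, x k ∈ C := fun k => intrinsicInterior_subset (hmem k)
  have hstep : ∀ k, f (x (k + 1)) - f xstar + L * bregman φ xstar (x (k + 1)) ≤
      (1 - μ / L) * (L * bregman φ xstar (x k)) := fun k =>
    calc _ ≤ (L - μ) * bregman φ xstar (x k) :=
          mirrorStep_sub_add_mul_bregman_le hC hf hφdiff hsmooth hstrong (hmem k) (hmem (k + 1))
            (hiter k) hxstar
      _ = _ := by field_simp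
  have hbregman_nonneg : ∀ k, 0 ≤ L * bregman φ xstar (x k) := fun k =>
    mul_nonneg hL.le (hφsc.convexOn.bregman_nonneg (hmemC k)
      (hC.openSegment_subset (hmemC k) hxstar) (hφdiff _) hφdiff.continuous.continuousAt)
  intro k hk
  obtain ⟨j, rfl⟩ := Nat.exists_eq_add_of_le' hk
  simpa only [mul_assoc] using le_pow_mul_of_add_le_mul (a := fun k => f (x k) - f xstar)
    (fun k => sub_nonneg.2 (hopt _ (hmemC k))) hbregman_nonneg hstep j

/-- Linear convergence of mirror descent with constant step size `1/L` when `f` is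
`L`-relatively smooth and `μ`-relatively strongly convex with respect to `φ`:
`f(x^k) − f* ≤ (1 − μ/L)^k · L · D_φ(x*, x^0)` for all `k ≥ 1`. -/
theorem stmt_8 {V : Type*} [NormedAddCommGroup V] [InnerProductSpace ℝ V]
    [FiniteDimensional ℝ V]
    (C : Set V) (hC : Convex ℝ C) (f φ : V → ℝ) (L : ℝ) (hL : 0 < L)
    (hf : Differentiable ℝ f) (hfc : ConvexOn ℝ C f)
    -- φ is Legendre: lower semicontinuous, strictly convex, essentially smooth
    (hφlsc : LowerSemicontinuous φ) (hφsc : StrictConvexOn ℝ C φ)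
    (hφdiff : Differentiable ℝ φ)
    -- f is L-smooth relative to φ on C
    (hsmooth : ConvexOn ℝ (intrinsicInterior ℝ C) (fun x => L * φ x - f x))
    -- the mirror descent iterates, well-defined in the relative interior of C
    (x : ℕ → V) (hmem : ∀ k, x k ∈ intrinsicInterior ℝ C)
    (hiter : ∀ k, ∀ y ∈ C,
      ⟪gradient f (x k), x (k + 1)⟫ + L * bregman φ (x (k + 1)) (x k) ≤
        ⟪gradient f (x k), y⟫ + L * bregman φ y (x k))
    -- f is μ-strongly convex relative to φ on C
    (μ : ℝ) (hμ : 0 < μ)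
    (hstrong : ConvexOn ℝ (intrinsicInterior ℝ C) (fun x => f x - μ * φ x))
    -- x* is a minimizer of f over C
    (xstar : V) (hxstar : xstar ∈ C) (hopt : ∀ y ∈ C, f xstar ≤ f y) :
    ∀ k : ℕ, 1 ≤ k →
      f (x k) - f xstar ≤ (1 - μ / L) ^ k * L * bregman φ xstar (x 0) :=
  stmt_8_general C hC f φ L hL hf hφsc hφdiff hsmooth x hmem hiter μ hstrong xstar hxstar hopt
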